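/- Let g be a (right) Leibniz algebra over a field k of characteristic zero. For every n ≥ 2, every cycle X ∈ L_n (i.e. X ∈ L_n with d_n X = 0) and every x ∈ g, the element X·x (diagonal right action) is a boundary of the Pirashvili complex: there exists Y ∈ L_{n+1} with d_{n+1} Y = X·x (explicitly, one may take Y = (−1)^n (X⊗x − (−1)^n x⊗X)). Consequently the induced action of g_Lie on the homology of the complex (L_•, d) is trivial in homological degrees ≥ 2. -/
import Mathlib


open scoped TensorProduct

/-- The pure tensor `x 0 ⊗ x 1 ⊗ ... ⊗ x (n-1)`, viewed inside the tensor algebra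
`T(g) = ⊕ₙ g^{⊗n}`. -/
noncomputable def pt (k : Type*) [CommSemiring k] {g : Type*} [AddCommMonoid g] [Module k g]
    {n : ℕ} (x : Fin n → g) : TensorAlgebra k g :=
  (List.ofFn fun i => TensorAlgebra.ι k (x i)).prod

/-- The degree-`n` component `g^{⊗n}` of the tensor algebra: the span of the pure tensors of
length `n`. -/
noncomputable def tensorGrade (k : Type*) [CommSemiring k] (g : Type*) [AddCommMonoid g]
    [Module k g] (n : ℕ) : Submodule k (TensorAlgebra k g) :=
  Submodule.span k {z | ∃ x : Fin n → g, z = pt k x}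

section PT
variable {k : Type*} [CommSemiring k] {g : Type*} [AddCommMonoid g] [Module k g]

lemma pt_zero (x : Fin 0 → g) : pt k x = 1 := by simp [pt]

lemma pt_snoc {n : ℕ} (x : Fin n → g) (w : g) :
    pt k (Fin.snoc x w) = pt k x * TensorAlgebra.ι k w := by
  unfold pt
  rw [List.ofFn_succ']
  simp [Fin.snoc_castSucc, Fin.snoc_last]

lemma pt_cons {n : ℕ} (x : Fin n → g) (w : g) :
    pt k (Fin.cons w x) = TensorAlgebra.ι k w * pt k x := by
  unfold pt
  rw [List.ofFn_succ]
  simp [Fin.cons_succ]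

lemma pt_one (x : Fin 1 → g) : pt k x = TensorAlgebra.ι k (x 0) := by
  simp [pt, List.ofFn_succ]

lemma mem_grade_pt {n : ℕ} (x : Fin n → g) : pt k x ∈ tensorGrade k g n :=
  Submodule.subset_span ⟨x, rfl⟩

lemma ι_mem_grade (w : g) : TensorAlgebra.ι k w ∈ tensorGrade k g 1 := by
  have := mem_grade_pt (k := k) (fun _ : Fin 1 => w)
  rwa [pt_one] at this

lemma span_apply_eq {M N : Type*} [AddCommMonoid M] [Module k M] [AddCommMonoid N] [Module k N]
    (Ψ : M →ₗ[k] N) {s : Set M} (h : ∀ z ∈ s, Ψ z = 0) {X : M}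
    (hX : X ∈ Submodule.span k s) : Ψ X = 0 :=
  LinearMap.mem_ker.1 (Submodule.span_le.2 (fun z hz => LinearMap.mem_ker.2 (h z hz)) hX)

lemma grade_mul_ι {n : ℕ} {X : TensorAlgebra k g} (hX : X ∈ tensorGrade k g n) (w : g) :
    X * TensorAlgebra.ι k w ∈ tensorGrade k g (n + 1) := by
  have hle : tensorGrade k g n ≤
      Submodule.comap (LinearMap.mulRight k (TensorAlgebra.ι k w)) (tensorGrade k g (n+1)) := by
    refine Submodule.span_le.2 (fun z hz => ?_)
    obtain ⟨x, rfl⟩ := hz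
    show pt k x * TensorAlgebra.ι k w ∈ tensorGrade k g (n+1)
    rw [← pt_snoc]
    exact mem_grade_pt _
  exact hle hX

lemma ι_mul_grade {n : ℕ} {X : TensorAlgebra k g} (hX : X ∈ tensorGrade k g n) (w : g) :
    TensorAlgebra.ι k w * X ∈ tensorGrade k g (n + 1) := by
  have hle : tensorGrade k g n ≤
      Submodule.comap (LinearMap.mulLeft k (TensorAlgebra.ι k w)) (tensorGrade k g (n+1)) := by
    refine Submodule.span_le.2 (fun z hz => ?_)
    obtain ⟨x, rfl⟩ := hz
    show TensorAlgebra.ι k w * pt k x ∈ tensorGrade k g (n+1)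
    rw [← pt_cons]
    exact mem_grade_pt _
  exact hle hX

lemma grade_mul {p : ℕ} {V : TensorAlgebra k g} (hV : V ∈ tensorGrade k g p) :
    ∀ (n : ℕ) {X : TensorAlgebra k g}, X ∈ tensorGrade k g n →
      V * X ∈ tensorGrade k g (p + n) := by
  intro n
  induction n with
  | zero =>
    intro X hX
    have hle : tensorGrade k g 0 ≤
        Submodule.comap (LinearMap.mulLeft k V) (tensorGrade k g (p+0)) := by
      refine Submodule.span_le.2 (fun z hz => ?_)
      obtain ⟨x, rfl⟩ := hz
      show V * pt k x ∈ tensorGrade k g (p+0)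
      rw [pt_zero, mul_one]
      exact hV
    exact hle hX
  | succ n IH =>
    intro X hX
    have hle : tensorGrade k g (n+1) ≤
        Submodule.comap (LinearMap.mulLeft k V) (tensorGrade k g (p+(n+1))) := by
      refine Submodule.span_le.2 (fun z hz => ?_)
      obtain ⟨x, rfl⟩ := hz
      show V * pt k x ∈ tensorGrade k g (p+(n+1))
      rw [← Fin.snoc_init_self x, pt_snoc, ← mul_assoc]
      exact grade_mul_ι (IH (mem_grade_pt _)) _
    exact hle hX
end PT

section DACT
variable {k : Type*} [Field k] {g : Type*} [AddCommGroup g] [Module k g]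
  (mul : g →ₗ[k] g →ₗ[k] g)
  (D : TensorAlgebra k g →ₗ[k] TensorAlgebra k g)
  (act : TensorAlgebra k g →ₗ[k] g →ₗ[k] TensorAlgebra k g)

variable (hD : ∀ (m : ℕ) (x : Fin (m + 1) → g),
      D (pt k x) = ∑ j : Fin (m + 1),
        ∑ i ∈ Finset.univ.filter (fun i : Fin m => i.castSucc < j),
          ((-1 : k) ^ (j : ℕ)) •
            pt k (Function.update (fun a : Fin m => x (j.succAbove a)) i
              (mul (x i.castSucc) (x j))))
  (hact : ∀ (n : ℕ) (x : Fin n → g) (y : g),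
      act (pt k x) y = ∑ i : Fin n, pt k (Function.update x i (mul (x i) y)))

include hD in
lemma D_ι (w : g) : D (TensorAlgebra.ι k w) = 0 := by
  have h := hD 0 (fun _ => w)
  rw [pt_one] at h
  simpa using h

include hact in
lemma act_ι (u w : g) : act (TensorAlgebra.ι k u) w = TensorAlgebra.ι k (mul u w) := by
  have h := hact 1 (fun _ => u) w
  rw [pt_one] at h
  rw [h, Fin.sum_univ_one, pt_one]
  simp

include hD hact in
lemma D_mul_ι_pure (p : ℕ) (x : Fin (p + 1) → g) (w : g) :
    D (pt k x * TensorAlgebra.ι k w)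
      = D (pt k x) * TensorAlgebra.ι k w + ((-1 : k) ^ (p + 1)) • act (pt k x) w := by
  rw [← pt_snoc, hD (p + 1) (Fin.snoc x w), hD p x, Fin.sum_univ_castSucc]
  congr 1
  · -- castSucc part equals D(pt x) * ι w
    rw [Finset.sum_mul]
    refine Finset.sum_congr rfl (fun j' _ => ?_)
    rw [Finset.sum_mul, Finset.sum_filter, Finset.sum_filter, Fin.sum_univ_castSucc]
    have hfalse : ¬ ((Fin.last p).castSucc < (Fin.castSucc j')) := by
      rw [Fin.castSucc_lt_castSucc_iff]
      exact Fin.not_lt.mpr (Fin.le_last j')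
    rw [if_neg hfalse, add_zero]
    refine Finset.sum_congr rfl (fun i'' _ => ?_)
    simp only [Fin.castSucc_lt_castSucc_iff]
    by_cases hc : (Fin.castSucc i'') < j'
    · rw [if_pos hc, if_pos hc, smul_mul_assoc, ← pt_snoc, Fin.coe_castSucc]
      congr 1
      have hbf : (fun a : Fin (p + 1) => Fin.snoc (α := fun _ => g) x w ((Fin.castSucc j').succAbove a))
          = (Fin.snoc (fun a : Fin p => x (j'.succAbove a)) w : Fin (p+1) → g) := by
        funext a
        induction a using Fin.lastCases with
        | last => rw [Fin.succAbove_castSucc_of_le _ _ (Fin.le_last j'), Fin.succ_last,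
            Fin.snoc_last, Fin.snoc_last]
        | cast a'' => rw [Fin.castSucc_succAbove_castSucc, Fin.snoc_castSucc, Fin.snoc_castSucc]
      rw [Fin.snoc_update, hbf, Fin.snoc_castSucc, Fin.snoc_castSucc]
    · rw [if_neg hc, if_neg hc]
  · -- last part equals σ • act
    rw [Finset.filter_true_of_mem (fun i _ => Fin.castSucc_lt_last i), hact (p+1) x w,
      Finset.smul_sum]
    refine Finset.sum_congr rfl (fun i _ => ?_)
    simp [Fin.succAbove_last, Fin.snoc_castSucc, Fin.snoc_last, Fin.val_last]

include hact in
lemma act_mul_ι_pure (p : ℕ) (v : Fin p → g) (u w : g) :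
    act (pt k v * TensorAlgebra.ι k u) w
      = act (pt k v) w * TensorAlgebra.ι k u + pt k v * TensorAlgebra.ι k (mul u w) := by
  rw [← pt_snoc, hact (p + 1) (Fin.snoc v u) w, Fin.sum_univ_castSucc, hact p v w,
    Finset.sum_mul]
  congr 1
  · refine Finset.sum_congr rfl (fun i _ => ?_)
    rw [← pt_snoc]
    congr 1
    rw [Fin.snoc_castSucc, ← Fin.snoc_update]
  · rw [Fin.snoc_last, Fin.update_snoc_last, pt_snoc]

include hD hact in
lemma D_mul_ι (p : ℕ) {V : TensorAlgebra k g} (hV : V ∈ tensorGrade k g (p + 1)) (w : g) :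
    D (V * TensorAlgebra.ι k w)
      = D V * TensorAlgebra.ι k w + ((-1 : k) ^ (p + 1)) • act V w := by
  set c : k := (-1 : k) ^ (p + 1) with hc
  set Ψ : TensorAlgebra k g →ₗ[k] TensorAlgebra k g :=
    D ∘ₗ LinearMap.mulRight k (TensorAlgebra.ι k w)
      - (LinearMap.mulRight k (TensorAlgebra.ι k w)) ∘ₗ D
      - c • (act.flip w) with hΨ
  have hgen : ∀ z ∈ {z : TensorAlgebra k g | ∃ x : Fin (p+1) → g, z = pt k x}, Ψ z = 0 := by
    rintro z ⟨x, rfl⟩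
    simp only [hΨ, LinearMap.sub_apply, LinearMap.comp_apply, LinearMap.mulRight_apply,
      LinearMap.smul_apply, LinearMap.flip_apply]
    rw [D_mul_ι_pure mul D act hD hact p x w]
    abel
  have h := span_apply_eq Ψ hgen hV
  simp only [hΨ, LinearMap.sub_apply, LinearMap.comp_apply, LinearMap.mulRight_apply,
    LinearMap.smul_apply, LinearMap.flip_apply] at h
  rw [sub_sub, sub_eq_zero] at h
  rw [h]

include hact in
lemma act_mul_ι (q : ℕ) {V : TensorAlgebra k g} (hV : V ∈ tensorGrade k g q) (u w : g) :
    act (V * TensorAlgebra.ι k u) w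
      = act V w * TensorAlgebra.ι k u + V * TensorAlgebra.ι k (mul u w) := by
  set Ψ : TensorAlgebra k g →ₗ[k] TensorAlgebra k g :=
    (act.flip w) ∘ₗ LinearMap.mulRight k (TensorAlgebra.ι k u)
      - (LinearMap.mulRight k (TensorAlgebra.ι k u)) ∘ₗ (act.flip w)
      - LinearMap.mulRight k (TensorAlgebra.ι k (mul u w)) with hΨ
  have hgen : ∀ z ∈ {z : TensorAlgebra k g | ∃ x : Fin q → g, z = pt k x}, Ψ z = 0 := by
    rintro z ⟨x, rfl⟩
    simp only [hΨ, LinearMap.sub_apply, LinearMap.comp_apply, LinearMap.mulRight_apply,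
      LinearMap.flip_apply]
    rw [act_mul_ι_pure mul act hact q x u w]
    abel
  have h := span_apply_eq Ψ hgen hV
  simp only [hΨ, LinearMap.sub_apply, LinearMap.comp_apply, LinearMap.mulRight_apply,
    LinearMap.flip_apply] at h
  rw [sub_sub, sub_eq_zero] at h
  rw [h]

include hact in
lemma act_one (w : g) : act 1 w = 0 := by
  have h := hact 0 (fun i => (Fin.elim0 i : g)) w
  rw [pt_zero] at h
  simpa using h

include hact in
lemma act_mul (n : ℕ) :
    ∀ {X : TensorAlgebra k g}, X ∈ tensorGrade k g (n + 1) →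
    ∀ (q : ℕ) (V : TensorAlgebra k g), V ∈ tensorGrade k g q → ∀ w : g,
      act (V * X) w = act V w * X + V * act X w := by
  induction n with
  | zero =>
    intro X hX q V hV w
    set Ψ : TensorAlgebra k g →ₗ[k] TensorAlgebra k g :=
      (act.flip w) ∘ₗ LinearMap.mulLeft k V
        - LinearMap.mulLeft k (act V w)
        - (LinearMap.mulLeft k V) ∘ₗ (act.flip w) with hΨ
    have hgen : ∀ z ∈ {z : TensorAlgebra k g | ∃ x : Fin 1 → g, z = pt k x}, Ψ z = 0 := by
      rintro z ⟨x, rfl⟩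
      simp only [hΨ, LinearMap.sub_apply, LinearMap.comp_apply, LinearMap.mulLeft_apply,
        LinearMap.flip_apply]
      rw [pt_one, act_ι mul act hact, act_mul_ι mul act hact q hV]
      abel
    have h := span_apply_eq Ψ hgen hX
    simp only [hΨ, LinearMap.sub_apply, LinearMap.comp_apply, LinearMap.mulLeft_apply,
      LinearMap.flip_apply] at h
    rw [sub_sub, sub_eq_zero] at h
    rw [h]
  | succ n IH =>
    intro X hX q V hV w
    set Ψ : TensorAlgebra k g →ₗ[k] TensorAlgebra k g :=
      (act.flip w) ∘ₗ LinearMap.mulLeft k V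
        - LinearMap.mulLeft k (act V w)
        - (LinearMap.mulLeft k V) ∘ₗ (act.flip w) with hΨ
    have hgen : ∀ z ∈ {z : TensorAlgebra k g | ∃ x : Fin (n+2) → g, z = pt k x}, Ψ z = 0 := by
      rintro z ⟨x, rfl⟩
      simp only [hΨ, LinearMap.sub_apply, LinearMap.comp_apply, LinearMap.mulLeft_apply,
        LinearMap.flip_apply]
      rw [show pt k x = pt k (Fin.init x) * TensorAlgebra.ι k (x (Fin.last (n+1))) from by
        rw [← pt_snoc, Fin.snoc_init_self]]
      have hX' : pt k (Fin.init x) ∈ tensorGrade k g (n+1) := mem_grade_pt _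
      rw [← mul_assoc, act_mul_ι mul act hact (q + (n+1)) (grade_mul hV (n+1) hX'),
        IH hX' q V hV w, act_mul_ι mul act hact (n+1) hX',
        mul_assoc]
      noncomm_ring
    have h := span_apply_eq Ψ hgen hX
    simp only [hΨ, LinearMap.sub_apply, LinearMap.comp_apply, LinearMap.mulLeft_apply,
      LinearMap.flip_apply] at h
    rw [sub_sub, sub_eq_zero] at h
    rw [h]

variable (L : ℕ → Submodule k (TensorAlgebra k g))
  (hL1 : L 1 = tensorGrade k g 1)
  (hLsucc : ∀ n : ℕ, 1 ≤ n → L (n + 1) =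
      Submodule.span k {z | ∃ X ∈ L n, ∃ y : g,
        z = X * TensorAlgebra.ι k y - ((-1 : k) ^ n) • (TensorAlgebra.ι k y * X)})

include hL1 hLsucc in
lemma L_le_grade : ∀ n : ℕ, L (n + 1) ≤ tensorGrade k g (n + 1) := by
  intro n
  induction n with
  | zero => exact le_of_eq hL1
  | succ n IH =>
    rw [hLsucc (n+1) (by omega)]
    refine Submodule.span_le.2 ?_
    rintro z ⟨A, hA, y, rfl⟩
    have hAg := IH hA
    exact sub_mem (grade_mul_ι hAg y) (Submodule.smul_mem _ _ (ι_mul_grade hAg y))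

include hD hact hL1 hLsucc in
lemma main_vanish : ∀ n : ℕ, ∀ X ∈ L (n + 2), ∀ (p : ℕ) (V : TensorAlgebra k g),
    V ∈ tensorGrade k g (p + 1) →
    D (V * X) - D V * X - ((-1 : k) ^ (p + 1)) • (V * D X) = 0 := by
  intro n
  induction n with
  | zero =>
    intro X hX p V hV
    rw [hLsucc 1 le_rfl] at hX
    set Ψ : TensorAlgebra k g →ₗ[k] TensorAlgebra k g :=
      D ∘ₗ LinearMap.mulLeft k V - LinearMap.mulLeft k (D V)
        - ((-1 : k) ^ (p + 1)) • ((LinearMap.mulLeft k V) ∘ₗ D) with hΨ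
    have key : ∀ u y : g, Ψ (TensorAlgebra.ι k u * TensorAlgebra.ι k y)
        = ((-1:k)^(p+1)) • (act V u * TensorAlgebra.ι k y)
          + ((-1:k)^(p+2)) • (act V y * TensorAlgebra.ι k u)
          + ((-1:k)^(p+2)) • (V * TensorAlgebra.ι k (mul u y))
          + ((-1:k)^(p+1)) • (V * TensorAlgebra.ι k (mul u y)) := by
      intro u y
      simp only [hΨ, LinearMap.sub_apply, LinearMap.comp_apply, LinearMap.mulLeft_apply,
        LinearMap.smul_apply]
      rw [show V * (TensorAlgebra.ι k u * TensorAlgebra.ι k y)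
            = (V * TensorAlgebra.ι k u) * TensorAlgebra.ι k y from (mul_assoc _ _ _).symm,
        D_mul_ι mul D act hD hact (p+1) (grade_mul_ι hV u) y,
        D_mul_ι mul D act hD hact p hV u,
        act_mul_ι mul act hact (p+1) hV u y,
        D_mul_ι mul D act hD hact 0 (ι_mem_grade u) y,
        D_ι mul D hD, act_ι mul act hact]
      simp only [zero_mul, zero_add, add_mul, smul_mul_assoc, mul_smul_comm, mul_add,
        smul_add, smul_smul, mul_assoc]
      module
    have hgen : ∀ z ∈ {z : TensorAlgebra k g | ∃ A ∈ L 1, ∃ y : g,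
        z = A * TensorAlgebra.ι k y - ((-1 : k) ^ 1) • (TensorAlgebra.ι k y * A)}, Ψ z = 0 := by
      rintro z ⟨A, hA1, y, rfl⟩
      rw [hL1] at hA1
      set N : TensorAlgebra k g →ₗ[k] TensorAlgebra k g :=
        LinearMap.mulRight k (TensorAlgebra.ι k y)
          - ((-1 : k) ^ 1) • LinearMap.mulLeft k (TensorAlgebra.ι k y) with hN
      have hgen2 : ∀ w ∈ {z : TensorAlgebra k g | ∃ x : Fin 1 → g, z = pt k x},
          (Ψ ∘ₗ N) w = 0 := by
        rintro w ⟨xa, rfl⟩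
        rw [pt_one]
        simp only [hN, LinearMap.comp_apply, LinearMap.sub_apply, LinearMap.smul_apply,
          LinearMap.mulRight_apply, LinearMap.mulLeft_apply]
        rw [map_sub, map_smul, key (xa 0) y, key y (xa 0)]
        module
      have h := span_apply_eq (Ψ ∘ₗ N) hgen2 hA1
      simp only [hN, LinearMap.comp_apply, LinearMap.sub_apply, LinearMap.smul_apply,
        LinearMap.mulRight_apply, LinearMap.mulLeft_apply] at h
      exact h
    have h := span_apply_eq Ψ hgen hX
    simpa [hΨ] using h
  | succ n IH =>
    intro X hX p V hV
    rw [hLsucc (n+2) (by omega)] at hX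
    set Ψ : TensorAlgebra k g →ₗ[k] TensorAlgebra k g :=
      D ∘ₗ LinearMap.mulLeft k V - LinearMap.mulLeft k (D V)
        - ((-1 : k) ^ (p + 1)) • ((LinearMap.mulLeft k V) ∘ₗ D) with hΨ
    have hgen : ∀ z ∈ {z : TensorAlgebra k g | ∃ A ∈ L (n+2), ∃ y : g,
        z = A * TensorAlgebra.ι k y - ((-1 : k) ^ (n+2)) • (TensorAlgebra.ι k y * A)},
        Ψ z = 0 := by
      rintro z ⟨A, hA, y, rfl⟩
      have hAg : A ∈ tensorGrade k g (n+2) := L_le_grade L hL1 hLsucc (n+1) hA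
      have hVA : V * A ∈ tensorGrade k g (p+n+2+1) := by
        rw [show p+n+2+1 = (p+1)+(n+2) from by omega]
        exact grade_mul hV (n+2) hAg
      have hFVA := IH A hA p V hV
      rw [sub_sub, sub_eq_zero] at hFVA
      have hF0 := IH A hA 0 (TensorAlgebra.ι k y) (ι_mem_grade y)
      rw [D_ι mul D hD, zero_mul, sub_zero] at hF0
      have hDιA : D (TensorAlgebra.ι k y * A)
          = ((-1:k)^(0+1)) • (TensorAlgebra.ι k y * D A) := by
        rw [sub_eq_zero] at hF0; exact hF0
      have hFVι := IH A hA (p+1) (V * TensorAlgebra.ι k y) (grade_mul_ι hV y)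
      rw [sub_sub, sub_eq_zero] at hFVι
      have e1 : Ψ (A * TensorAlgebra.ι k y) = ((-1:k)^(p+n+3)) • (act V y * A) := by
        simp only [hΨ, LinearMap.sub_apply, LinearMap.comp_apply, LinearMap.mulLeft_apply,
          LinearMap.smul_apply]
        rw [show V * (A * TensorAlgebra.ι k y) = (V * A) * TensorAlgebra.ι k y from
            (mul_assoc _ _ _).symm,
          D_mul_ι mul D act hD hact (p+n+2) hVA y,
          D_mul_ι mul D act hD hact (n+1) hAg y,
          act_mul mul act hact (n+1) hAg (p+1) V hV y, hFVA]
        simp only [add_mul, smul_mul_assoc, mul_add, mul_smul_comm, smul_add, smul_smul,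
          mul_assoc]
        have hsc : ((-1:k)^(p+n+2+1)) = ((-1:k)^(p+n+3)) := by norm_num
        module
      have e2 : Ψ (TensorAlgebra.ι k y * A) = ((-1:k)^(p+1)) • (act V y * A) := by
        simp only [hΨ, LinearMap.sub_apply, LinearMap.comp_apply, LinearMap.mulLeft_apply,
          LinearMap.smul_apply]
        rw [show V * (TensorAlgebra.ι k y * A) = (V * TensorAlgebra.ι k y) * A from
            (mul_assoc _ _ _).symm,
          hFVι, D_mul_ι mul D act hD hact p hV y, hDιA]
        simp only [add_mul, smul_mul_assoc, mul_add, mul_smul_comm, smul_add, smul_smul,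
          mul_assoc, smul_sub]
        module
      rw [map_sub, map_smul, e1, e2, smul_smul, sub_eq_zero]
      congr 1
      ring
    have h := span_apply_eq Ψ hgen hX
    simpa [hΨ] using h
end DACT
/-- for a (right) Leibniz algebra `g` over a field `k` of characteristic zero,
`n ≥ 2` (below `n = m+2`), every cycle `X ∈ L n` (i.e. `dX = 0`) and every `x ∈ g`, the
element `X·x` is a boundary of the Pirashvili complex: there is `Y ∈ L (n+1)` with
`dY = X·x`; explicitly one may take `Y = (−1)ⁿ (X⊗x − (−1)ⁿ x⊗X)`.  (Hence the induced
`g_Lie`-action on the homology of `(L_•, d)` is trivial in degrees `≥ 2`.) -/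
theorem diagonal_action_is_boundary_on_cycles
    {k : Type*} [Field k] [CharZero k]
    {g : Type*} [AddCommGroup g] [Module k g]
    (mul : g →ₗ[k] g →ₗ[k] g)
    (hleib : ∀ x y z : g, mul x (mul y z) = mul (mul x y) z - mul (mul x z) y)
    (D : TensorAlgebra k g →ₗ[k] TensorAlgebra k g)
    (hD : ∀ (m : ℕ) (x : Fin (m + 1) → g),
      D (pt k x) = ∑ j : Fin (m + 1),
        ∑ i ∈ Finset.univ.filter (fun i : Fin m => i.castSucc < j),
          ((-1 : k) ^ (j : ℕ)) •
            pt k (Function.update (fun a : Fin m => x (j.succAbove a)) i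
              (mul (x i.castSucc) (x j))))
    (act : TensorAlgebra k g →ₗ[k] g →ₗ[k] TensorAlgebra k g)
    (hact : ∀ (n : ℕ) (x : Fin n → g) (y : g),
      act (pt k x) y = ∑ i : Fin n, pt k (Function.update x i (mul (x i) y)))
    (L : ℕ → Submodule k (TensorAlgebra k g))
    (hL1 : L 1 = tensorGrade k g 1)
    (hLsucc : ∀ n : ℕ, 1 ≤ n → L (n + 1) =
      Submodule.span k {z | ∃ X ∈ L n, ∃ y : g,
        z = X * TensorAlgebra.ι k y - ((-1 : k) ^ n) • (TensorAlgebra.ι k y * X)})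
    (m : ℕ) (X : TensorAlgebra k g) (hX : X ∈ L (m + 2)) (hXcycle : D X = 0) (x : g) :
    ∃ Y ∈ L (m + 3), D Y = act X x ∧
      Y = ((-1 : k) ^ (m + 2)) •
        (X * TensorAlgebra.ι k x - ((-1 : k) ^ (m + 2)) • (TensorAlgebra.ι k x * X)) := by
  refine ⟨((-1 : k) ^ (m + 2)) •
      (X * TensorAlgebra.ι k x - ((-1 : k) ^ (m + 2)) • (TensorAlgebra.ι k x * X)), ?_, ?_, rfl⟩
  · rw [hLsucc (m+2) (by omega)]
    exact Submodule.smul_mem _ _ (Submodule.subset_span ⟨X, hX, x, rfl⟩)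
  · have hXg : X ∈ tensorGrade k g (m + 2) := L_le_grade L hL1 hLsucc (m+1) hX
    have h1 : D (X * TensorAlgebra.ι k x)
        = ((-1 : k) ^ (m + 2)) • act X x := by
      rw [D_mul_ι mul D act hD hact (m+1) hXg x, hXcycle, zero_mul, zero_add]
    have h0 := main_vanish mul D act hD hact L hL1 hLsucc m X hX 0 (TensorAlgebra.ι k x)
      (ι_mem_grade x)
    rw [D_ι mul D hD, zero_mul, sub_zero, hXcycle, mul_zero, smul_zero, sub_zero] at h0
    rw [map_smul, map_sub, map_smul, h1, h0, smul_zero, sub_zero, smul_smul, ← mul_pow]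
    norm_num
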